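/- Group Contraction Lemma: For a social welfare function on at least three alternatives satisfying Pareto Efficiency, IIA, and Universality, any decisive coalition containing at least two voters has a proper subset that is also decisive. -/

import Mathlib

/-!
Field expansion: a coalition `C` that is almost decisive over one pair `(u, v)` is decisive
over every pair.
For a third alternative `w`, take the profile where `C` ranks `u > v > w` and everybody else
puts `v` first: almost decisiveness gives `u` over `v`, Pareto gives `v` over `w`, so `u` beats
`w`, and IIA transfers this to every profile agreeing with it on `(u, w)`. A mirror argument
gives `(w, v)`, and chaining these moves reaches every pair.

Contraction: for `i ∈ G`, let `i` rank `x > y > z`, the rest of `G` rank `z > x > y` and all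
others `y > z > x`. Decisiveness of `G` gives `x` over `y`. If `x` beats `z`, then `{i}` is almost
decisive over `(x, z)`; otherwise `z` beats `y` and `G \ {i}` is almost decisive over `(z, y)`.
-/

namespace Arrow

variable {V A : Type*}

section prefixRanking

variable [DecidableEq A]

/-- Ranks the elements of `l` first, in list order, and all others after them by a fixed
well-order (`List.idxOf` returns `l.length` off `l`). -/
noncomputable def prefixRanking (l : List A) : A → A → Prop :=
  Function.onFun (Prod.Lex (· < ·) WellOrderingRel) fun a => (l.idxOf a, a)

instance prefixRanking.isStrictTotalOrder (l : List A) :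
    IsStrictTotalOrder A (prefixRanking l) :=
  Function.Injective.isStrictTotalOrder_onFun (f := fun a => (l.idxOf a, a)) _
    fun _ _ h => congrArg Prod.snd h

theorem prefixRanking_cons_self {a b : A} (l : List A) (h : b ≠ a) :
    prefixRanking (a :: l) a b := by
  simp [prefixRanking, Function.onFun, Prod.lex_def, List.idxOf_cons_ne _ h.symm]

theorem prefixRanking_cons_iff {a b x : A} (l : List A) (ha : a ≠ x) (hb : b ≠ x) :
    prefixRanking (x :: l) a b ↔ prefixRanking l a b := by
  simp [prefixRanking, Function.onFun, Prod.lex_def, List.idxOf_cons_ne _ ha.symm,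
    List.idxOf_cons_ne _ hb.symm]

theorem prefixRanking_triple {a b c : A} (hab : a ≠ b) (hac : a ≠ c) (hbc : b ≠ c) :
    prefixRanking [a, b, c] a b ∧ prefixRanking [a, b, c] a c ∧ prefixRanking [a, b, c] b c :=
  ⟨prefixRanking_cons_self _ hab.symm, prefixRanking_cons_self _ hac.symm,
    (prefixRanking_cons_iff _ hab.symm hac.symm).2 (prefixRanking_cons_self _ hbc.symm)⟩

end prefixRanking

def IsProfile (R : V → A → A → Prop) : Prop :=
  ∀ i, IsStrictTotalOrder A (R i)

structure IsArrovian (f : (V → A → A → Prop) → A → A → Prop) : Prop where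
  isStrictTotalOrder : ∀ R, IsProfile R → IsStrictTotalOrder A (f R)
  pareto : ∀ R, IsProfile R → ∀ a b, (∀ i, R i a b) → f R a b
  iia : ∀ R R', IsProfile R → IsProfile R' → ∀ a b,
    (∀ i, R i a b ↔ R' i a b) → (f R a b ↔ f R' a b)

section Decisive

variable (f : (V → A → A → Prop) → A → A → Prop)

def Decisive (C : Finset V) (a b : A) : Prop :=
  ∀ R, IsProfile R → (∀ i ∈ C, R i a b) → f R a b

def AlmostDecisive (C : Finset V) (a b : A) : Prop :=
  ∀ R, IsProfile R → (∀ i ∈ C, R i a b) → (∀ i ∉ C, R i b a) → f R a b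

variable {f} {C : Finset V} {a b u v w : A}

theorem Decisive.almostDecisive (h : Decisive f C a b) : AlmostDecisive f C a b :=
  fun R hR hC _ => h R hR hC

theorem IsArrovian.almostDecisive_of_profile (hf : IsArrovian f) {R₀ : V → A → A → Prop}
    (hR₀ : IsProfile R₀) (hab : f R₀ a b) (hC : ∀ i ∈ C, R₀ i a b) (hC' : ∀ i ∉ C, R₀ i b a) :
    AlmostDecisive f C a b := by
  intro R hR hRC hRC'
  refine (hf.iia R₀ R hR₀ hR a b fun i => ?_).1 hab
  by_cases hi : i ∈ C
  · exact iff_of_true (hC i hi) (hRC i hi)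
  · have := hR₀ i; have := hR i
    exact iff_of_false (asymm_of _ (hC' i hi)) (asymm_of _ (hRC' i hi))

theorem IsArrovian.decisive_of_almostDecisive_left (hf : IsArrovian f)
    (huv : u ≠ v) (huw : u ≠ w) (hvw : v ≠ w) (h : AlmostDecisive f C u v) :
    Decisive f C u w := by
  classical
  intro R hR hC
  let R' i := prefixRanking
    (if i ∈ C then [u, v, w] else if R i u w then [v, u, w] else [v, w, u])
  have hR' : IsProfile R' := fun i => prefixRanking.isStrictTotalOrder _
  have key₁ := prefixRanking_triple huv huw hvw
  have key₂ := prefixRanking_triple huv.symm hvw huw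
  have key₃ := prefixRanking_triple hvw huv.symm huw.symm
  have huv' : f R' u v := by
    refine h R' hR' (fun i hi => ?_) fun i hi => ?_
    · simpa [R', hi] using key₁.1
    · by_cases hRi : R i u w
      · simpa [R', hi, hRi] using key₂.1
      · simpa [R', hi, hRi] using key₃.2.1
  have hvw' : f R' v w := by
    refine hf.pareto R' hR' v w fun i => ?_
    by_cases hi : i ∈ C
    · simpa [R', hi] using key₁.2.2
    · by_cases hRi : R i u w
      · simpa [R', hi, hRi] using key₂.2.1
      · simpa [R', hi, hRi] using key₃.1
  have := hf.isStrictTotalOrder R' hR'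
  refine (hf.iia R' R hR' hR u w fun i => ?_).1 (_root_.trans huv' hvw')
  by_cases hi : i ∈ C
  · exact iff_of_true (by simpa [R', hi] using key₁.2.1) (hC i hi)
  · by_cases hRi : R i u w
    · simpa [R', hi, hRi] using key₂.2.2
    · simpa [R', hi, hRi] using asymm_of (prefixRanking _) key₃.2.2

theorem IsArrovian.decisive_of_almostDecisive_right (hf : IsArrovian f)
    (huv : u ≠ v) (hwu : w ≠ u) (hwv : w ≠ v) (h : AlmostDecisive f C u v) :
    Decisive f C w v := by
  classical
  intro R hR hC
  let R' i := prefixRanking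
    (if i ∈ C then [w, u, v] else if R i w v then [w, v, u] else [v, w, u])
  have hR' : IsProfile R' := fun i => prefixRanking.isStrictTotalOrder _
  have key₁ := prefixRanking_triple hwu hwv huv
  have key₂ := prefixRanking_triple hwv hwu huv.symm
  have key₃ := prefixRanking_triple hwv.symm huv.symm hwu
  have hwu' : f R' w u := by
    refine hf.pareto R' hR' w u fun i => ?_
    by_cases hi : i ∈ C
    · simpa [R', hi] using key₁.1
    · by_cases hRi : R i w v
      · simpa [R', hi, hRi] using key₂.2.1
      · simpa [R', hi, hRi] using key₃.2.2
  have huv' : f R' u v := by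
    refine h R' hR' (fun i hi => ?_) fun i hi => ?_
    · simpa [R', hi] using key₁.2.2
    · by_cases hRi : R i w v
      · simpa [R', hi, hRi] using key₂.2.2
      · simpa [R', hi, hRi] using key₃.2.1
  have := hf.isStrictTotalOrder R' hR'
  refine (hf.iia R' R hR' hR w v fun i => ?_).1 (_root_.trans hwu' huv')
  by_cases hi : i ∈ C
  · exact iff_of_true (by simpa [R', hi] using key₁.2.1) (hC i hi)
  · by_cases hRi : R i w v
    · simpa [R', hi, hRi] using key₂.1
    · simpa [R', hi, hRi] using asymm_of (prefixRanking _) key₃.1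

theorem IsArrovian.decisive_of_almostDecisive (hf : IsArrovian f) (hA : 3 ≤ ENat.card A)
    (huv : u ≠ v) (h : AlmostDecisive f C u v) (hab : a ≠ b) : Decisive f C a b := by
  have hu : ∀ {c}, c ≠ u → Decisive f C u c := fun {c} hcu => by
    obtain ⟨w, hwu, hwv⟩ := ENat.exists_ne_ne_of_three_le hA u v
    by_cases hcv : c = v
    · subst hcv
      exact hf.decisive_of_almostDecisive_left hwu.symm huv hwv
        (hf.decisive_of_almostDecisive_left huv hwu.symm hwv.symm h).almostDecisive
    · exact hf.decisive_of_almostDecisive_left huv hcu.symm (Ne.symm hcv) h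
  by_cases hau : a = u
  · exact hau ▸ hu (hau ▸ hab.symm)
  by_cases hbu : b = u
  · subst hbu
    obtain ⟨w, hwa, hwb⟩ := ENat.exists_ne_ne_of_three_le hA a b
    have haw : Decisive f C a w :=
      hf.decisive_of_almostDecisive_right hwb.symm hau hwa.symm (hu hwb).almostDecisive
    exact hf.decisive_of_almostDecisive_left hwa.symm hab hwb haw.almostDecisive
  · exact hf.decisive_of_almostDecisive_right (Ne.symm hbu) hau hab (hu hbu).almostDecisive

theorem IsArrovian.almostDecisive_singleton_or_erase [DecidableEq V] (hf : IsArrovian f)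
    {G : Finset V} {x y z : A} (hxy : x ≠ y) (hxz : x ≠ z) (hyz : y ≠ z)
    (hG : Decisive f G x y) (i : V) :
    AlmostDecisive f {i} x z ∨ AlmostDecisive f (G.erase i) z y := by
  classical
  let R₀ j := prefixRanking
    (if j = i then [x, y, z] else if j ∈ G then [z, x, y] else [y, z, x])
  have hR₀ : IsProfile R₀ := fun j => prefixRanking.isStrictTotalOrder _
  have key₁ := prefixRanking_triple hxy hxz hyz
  have key₂ := prefixRanking_triple hxz.symm hyz.symm hxy
  have key₃ := prefixRanking_triple hyz hxy.symm hxz.symm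
  have hxy' : f R₀ x y := hG R₀ hR₀ fun j hj => by
    by_cases hji : j = i
    · simpa [R₀, hji] using key₁.1
    · simpa [R₀, hji, hj] using key₂.2.2
  have := hf.isStrictTotalOrder R₀ hR₀
  rcases trichotomous_of (f R₀) x z with hxz' | rfl | hzx'
  · refine .inl (hf.almostDecisive_of_profile hR₀ hxz' (fun j hj => ?_) fun j hj => ?_)
    · simpa [R₀, Finset.mem_singleton.1 hj] using key₁.2.1
    · by_cases hjG : j ∈ G
      · simpa [R₀, Finset.mem_singleton.not.1 hj, hjG] using key₂.1
      · simpa [R₀, Finset.mem_singleton.not.1 hj, hjG] using key₃.2.2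
  · exact absurd rfl hxz
  · refine .inr (hf.almostDecisive_of_profile hR₀ (_root_.trans hzx' hxy') (fun j hj => ?_)
      fun j hj => ?_)
    · simpa [R₀, Finset.ne_of_mem_erase hj, Finset.mem_of_mem_erase hj] using key₂.2.1
    · by_cases hji : j = i
      · simpa [R₀, hji] using key₁.2.2
      · have hjG : j ∉ G := fun hjG => hj (Finset.mem_erase.2 ⟨hji, hjG⟩)
        simpa [R₀, hji, hjG] using key₃.1

end Decisive

end Arrow

open Arrow in
theorem group_contraction_lemma_general
    {V A : Type} [Fintype A] (hA : 3 ≤ Fintype.card A)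
    (f : (V → A → A → Prop) → (A → A → Prop))
    (hout : ∀ R : V → A → A → Prop,
      (∀ i, IsStrictTotalOrder A (R i)) → IsStrictTotalOrder A (f R))
    (pareto : ∀ R : V → A → A → Prop, (∀ i, IsStrictTotalOrder A (R i)) →
      ∀ x y : A, (∀ i, R i x y) → f R x y)
    (iia : ∀ R R' : V → A → A → Prop,
      (∀ i, IsStrictTotalOrder A (R i)) → (∀ i, IsStrictTotalOrder A (R' i)) →
      ∀ x y : A, (∀ i, R i x y ↔ R' i x y) → (f R x y ↔ f R' x y))
    (G : Finset V) (hG : 2 ≤ G.card)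
    (decisive : ∀ a b : A, a ≠ b →
      ∀ R : V → A → A → Prop, (∀ i, IsStrictTotalOrder A (R i)) →
        (∀ i ∈ G, R i a b) → f R a b) :
    ∃ G' : Finset V, G' ⊂ G ∧
      ∀ a b : A, a ≠ b →
        ∀ R : V → A → A → Prop, (∀ i, IsStrictTotalOrder A (R i)) →
          (∀ i ∈ G', R i a b) → f R a b := by
  classical
  have hf : IsArrovian f := ⟨hout, pareto, iia⟩
  have hA' : 3 ≤ ENat.card A := by
    rw [ENat.card_eq_coe_fintype_card]; exact_mod_cast hA
  obtain ⟨x, y, z, hxy, hxz, hyz⟩ := Fintype.two_lt_card_iff.1 hA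
  obtain ⟨i, hi, j, hj, hij⟩ := Finset.one_lt_card.1 hG
  rcases hf.almostDecisive_singleton_or_erase hxy hxz hyz (decisive x y hxy) i with h | h
  · refine ⟨{i}, (Finset.ssubset_iff_of_subset (by simpa using hi)).2 ⟨j, hj, ?_⟩, ?_⟩
    · simpa using hij.symm
    · exact fun a b hab => hf.decisive_of_almostDecisive hA' hxz h hab
  · exact ⟨G.erase i, Finset.erase_ssubset hi,
      fun a b hab => hf.decisive_of_almostDecisive hA' hyz.symm h hab⟩

/-- Group Contraction Lemma: for a social welfare function satisfying Pareto Efficiency,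
IIA and Universality over at least three alternatives, any decisive coalition with at
least two voters has a proper subset that is also decisive. -/
theorem group_contraction_lemma
    {V A : Type} [Fintype V] [Fintype A] (hA : 3 ≤ Fintype.card A)
    (f : (V → A → A → Prop) → (A → A → Prop))
    (hout : ∀ R : V → A → A → Prop,
      (∀ i, IsStrictTotalOrder A (R i)) → IsStrictTotalOrder A (f R))
    (pareto : ∀ R : V → A → A → Prop, (∀ i, IsStrictTotalOrder A (R i)) →
      ∀ x y : A, (∀ i, R i x y) → f R x y)
    (iia : ∀ R R' : V → A → A → Prop,
      (∀ i, IsStrictTotalOrder A (R i)) → (∀ i, IsStrictTotalOrder A (R' i)) →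
      ∀ x y : A, (∀ i, R i x y ↔ R' i x y) → (f R x y ↔ f R' x y))
    (G : Finset V) (hG : 2 ≤ G.card)
    (decisive : ∀ a b : A, a ≠ b →
      ∀ R : V → A → A → Prop, (∀ i, IsStrictTotalOrder A (R i)) →
        (∀ i ∈ G, R i a b) → f R a b) :
    ∃ G' : Finset V, G' ⊂ G ∧
      ∀ a b : A, a ≠ b →
        ∀ R : V → A → A → Prop, (∀ i, IsStrictTotalOrder A (R i)) →
          (∀ i ∈ G', R i a b) → f R a b :=
  group_contraction_lemma_general hA f hout pareto iia G hG decisive
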